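/- Temperature runaways for slowly moving observers in Spiegel's model: let c > 0 and, for χ ∈ (0,1), define g(χ) = c·( artanh(χ)/χ − 1 ) and v(χ) = χ / g(χ). Then lim_{χ→1⁻} v(χ) = 0 and lim_{χ→1⁻} g(χ)·√(1 − v(χ)²) = +∞. (Interpreting v as the boost velocity and Γ′ = g·√(1−v²) as the growth rate seen by the boosted observer, there exist observers with infinitesimal speed relative to the medium who witness arbitrarily fast spatially homogeneous temperature runaways.) -/

import Mathlib

/-!
Statement 13: temperature runaways for slowly moving observers in Spiegel's model:
with `g(χ) = c(artanh(χ)/χ − 1)` and `v(χ) = χ/g(χ)`, one has `v(χ) → 0` and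
`g(χ)·√(1 − v(χ)²) → +∞` as `χ → 1⁻`.
-/

noncomputable section
open Real Filter

/-- The inverse hyperbolic tangent, `artanh x = (1/2) log((1+x)/(1−x))`. -/
def artanh (x : ℝ) : ℝ := (1 / 2) * Real.log ((1 + x) / (1 - x))

/-- The rest-frame growth parameter `g(χ) = c(artanh(χ)/χ − 1)`. -/
def gfun (c χ : ℝ) : ℝ := c * (_root_.artanh χ / χ - 1)

/-- The boost velocity `v(χ) = χ/g(χ)`. -/
def vfun (c χ : ℝ) : ℝ := χ / gfun c χ

open Topology

lemma tendsto_one_sub_nhdsLT_one : Tendsto (fun x : ℝ => 1 - x) (𝓝[<] 1) (𝓝[>] 0) := by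
  simpa using (continuous_sub_left (1 : ℝ)).continuousWithinAt.tendsto_nhdsWithin
    (s := Set.Iio 1) (x := 1) (t := Set.Ioi 0) fun _ hx => sub_pos.mpr hx

lemma tendsto_artanh_nhdsLT_one : Tendsto _root_.artanh (𝓝[<] 1) atTop := by
  have hnum : Tendsto (fun x : ℝ => 1 + x) (𝓝[<] 1) (𝓝 2) := by
    simpa [one_add_one_eq_two] using
      ((continuous_const_add (1 : ℝ)).tendsto 1).mono_left (nhdsWithin_le_nhds (s := Set.Iio 1))
  have hratio : Tendsto (fun x : ℝ => (1 + x) / (1 - x)) (𝓝[<] 1) atTop := by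
    simpa only [div_eq_mul_inv, mul_comm, Pi.inv_apply] using
      tendsto_one_sub_nhdsLT_one.inv_tendsto_nhdsGT_zero.atTop_mul_pos two_pos hnum
  exact (tendsto_log_atTop.comp hratio).const_mul_atTop one_half_pos

lemma tendsto_gfun_nhdsLT_one {c : ℝ} (hc : 0 < c) : Tendsto (gfun c) (𝓝[<] 1) atTop := by
  have hinv : Tendsto (fun x : ℝ => x⁻¹) (𝓝[<] 1) (𝓝 1) := by
    simpa using (continuousAt_inv₀ (one_ne_zero (α := ℝ))).tendsto.mono_left nhdsWithin_le_nhds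
  have hquot : Tendsto (fun x => _root_.artanh x / x) (𝓝[<] 1) atTop := by
    simpa only [div_eq_mul_inv] using tendsto_artanh_nhdsLT_one.atTop_mul_pos one_pos hinv
  exact (tendsto_atTop_add_const_right _ (-1) hquot).const_mul_atTop hc

lemma tendsto_vfun_nhdsLT_one {c : ℝ} (hc : 0 < c) : Tendsto (vfun c) (𝓝[<] 1) (𝓝 0) :=
  (tendsto_id.mono_left nhdsWithin_le_nhds).div_atTop (tendsto_gfun_nhdsLT_one hc)

theorem spiegel_temperature_runaways (c : ℝ) (hc : 0 < c) :
    Tendsto (fun χ => vfun c χ) (nhdsWithin 1 (Set.Iio 1)) (nhds 0) ∧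
    Tendsto (fun χ => gfun c χ * Real.sqrt (1 - vfun c χ ^ 2))
      (nhdsWithin 1 (Set.Iio 1)) atTop := by
  have hv := tendsto_vfun_nhdsLT_one hc
  have hsqrt : Tendsto (fun χ => √(1 - vfun c χ ^ 2)) (𝓝[<] 1) (𝓝 1) :=
    ((show Continuous fun v : ℝ => √(1 - v ^ 2) by fun_prop).tendsto' 0 1 (by simp)).comp hv
  exact ⟨hv, (tendsto_gfun_nhdsLT_one hc).atTop_mul_pos one_pos hsqrt⟩
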